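/- arXiv:1311.0830 — 8 statements merged into one kernel-verified Lean document; each statement's English description precedes it below -/
import Mathlib

section
/- Let C ⊆ ℝⁿ be a closed convex set and h ∉ C. Then the function t ↦ dist((1 + t)h, C) is differentiable at t = 0 with derivative ⟨h, Π(h,C)/‖Π(h,C)‖⟩, where Π(h,C) = h − Proj(h,C). -/
/-!
Let `u` be the unit vector `(h - p) / ‖h - p‖`. Since `p` is the nearest point, `C` lies in the
half-space `{s | ⟪u, s - p⟫ ≤ 0}`, so the affine function `x ↦ ⟪u, x - p⟫` is a lower bound for
`dist(·, C)`, while `x ↦ ‖x - p‖` is an upper bound. Both bounds equal `‖h - p‖` at `h` and have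
gradient `u` there, so `dist(·, C)` is differentiable at `h` with gradient `u`; the theorem is the
chain rule along the ray `t ↦ (1 + t) h`.
-/

open Filter Topology Metric Asymptotics
open scoped RealInnerProductSpace

theorem HasFDerivAt.squeeze {E : Type*} [NormedAddCommGroup E] [NormedSpace ℝ E]
    {l f g : E → ℝ} {f' : E →L[ℝ] ℝ} {x : E} (hl : HasFDerivAt l f' x) (hg : HasFDerivAt g f' x)
    (hlf : l ≤ᶠ[𝓝 x] f) (hfg : f ≤ᶠ[𝓝 x] g) (hx : l x = g x) : HasFDerivAt f f' x := by
  have hfx : f x = l x := le_antisymm (hx ▸ hfg.self_of_nhds) hlf.self_of_nhds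
  refine .of_isLittleO <|
    (IsBigO.of_norm_eventuallyLE ?_).trans_isLittleO
      (hl.isLittleO.norm_left.add hg.isLittleO.norm_left)
  filter_upwards [hlf, hfg] with y hly hfy
  simp only [Real.norm_eq_abs, hfx, ← hx]
  rw [abs_le]
  constructor <;>
    linarith [neg_abs_le (l y - l x - f' (y - x)), abs_nonneg (l y - l x - f' (y - x)),
      le_abs_self (g y - l x - f' (y - x)), abs_nonneg (g y - l x - f' (y - x))]

section
variable {F : Type*} [NormedAddCommGroup F] [InnerProductSpace ℝ F]

theorem inner_sub_le_infDist {C : Set F} (hC : C.Nonempty) {p u : F} (hu : ‖u‖ ≤ 1)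
    (hCu : ∀ s ∈ C, ⟪u, s - p⟫ ≤ 0) (x : F) : ⟪u, x - p⟫ ≤ infDist x C := by
  refine (le_infDist hC).2 fun s hs => ?_
  calc ⟪u, x - p⟫ = ⟪u, x - s⟫ + ⟪u, s - p⟫ := by rw [← inner_add_right, sub_add_sub_cancel]
    _ ≤ ⟪u, x - s⟫ := by linarith [hCu s hs]
    _ ≤ ‖u‖ * ‖x - s‖ := real_inner_le_norm _ _
    _ ≤ dist x s := by rw [dist_eq_norm]; exact mul_le_of_le_one_left (norm_nonneg _) hu

theorem hasFDerivAt_norm_sub {p x : F} (hx : x ≠ p) :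
    HasFDerivAt (fun y => ‖y - p‖) (innerSL ℝ (‖x - p‖⁻¹ • (x - p))) x := by
  have hsq :=
    (hasStrictFDerivAt_norm_sq (x - p)).hasFDerivAt.comp x ((hasFDerivAt_id x).sub_const p)
  have hsqrt := hsq.sqrt (by simpa [sub_eq_zero] using hx)
  simp only [Function.comp_def, Real.sqrt_sq (norm_nonneg _)] at hsqrt
  refine hsqrt.congr_fderiv (ContinuousLinearMap.ext fun v => ?_)
  simp only [id, FunLike.coe_smul, Pi.smul_apply, ContinuousLinearMap.comp_apply,
    innerSL_apply_apply, ContinuousLinearMap.id_apply, real_inner_smul_left, smul_eq_mul,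
    nsmul_eq_mul, Nat.cast_ofNat]
  field_simp

theorem real_inner_sub_sub_nonpos_of_forall_norm_sub_le {C : Set F} (hC : Convex ℝ C) {h p : F}
    (hpC : p ∈ C) (hproj : ∀ s ∈ C, ‖h - p‖ ≤ ‖h - s‖) : ∀ s ∈ C, ⟪h - p, s - p⟫ ≤ 0 := by
  have : Nonempty C := ⟨⟨p, hpC⟩⟩
  refine (norm_eq_iInf_iff_real_inner_le_zero hC hpC).1 <|
    le_antisymm (le_ciInf fun s => hproj s s.2) ?_
  exact ciInf_le ⟨0, fun _ ⟨s, hs⟩ => hs ▸ norm_nonneg _⟩ (⟨p, hpC⟩ : C)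

theorem hasFDerivAt_infDist_of_forall_norm_sub_le {C : Set F} (hC : Convex ℝ C) {h p : F}
    (hh : h ∉ C) (hpC : p ∈ C) (hproj : ∀ s ∈ C, ‖h - p‖ ≤ ‖h - s‖) :
    HasFDerivAt (infDist · C) (innerSL ℝ (‖h - p‖⁻¹ • (h - p))) h := by
  set u := ‖h - p‖⁻¹ • (h - p)
  have hhp : h ≠ p := fun e => hh (e ▸ hpC)
  have hu : ‖u‖ = 1 := norm_smul_inv_norm (sub_ne_zero.2 hhp)
  have hCu (s : F) (hs : s ∈ C) : ⟪u, s - p⟫ ≤ 0 := by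
    rw [real_inner_smul_left]
    exact mul_nonpos_of_nonneg_of_nonpos (by positivity)
      (real_inner_sub_sub_nonpos_of_forall_norm_sub_le hC hpC hproj s hs)
  have hlow : HasFDerivAt (fun x => ⟪u, x - p⟫) (innerSL ℝ u) h := by
    simpa only [innerSL_apply_apply, ← inner_sub_right] using
      ((innerSL ℝ u).hasFDerivAt (x := h)).sub_const ⟪u, p⟫
  have hup (x : F) : infDist x C ≤ ‖x - p‖ :=
    (infDist_le_dist_of_mem hpC).trans_eq (dist_eq_norm _ _)
  refine hlow.squeeze (hasFDerivAt_norm_sub hhp)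
    (.of_forall (inner_sub_le_infDist ⟨p, hpC⟩ hu.le hCu)) (.of_forall hup) ?_
  rw [real_inner_smul_left, real_inner_self_eq_norm_sq]
  field_simp [norm_ne_zero_iff.2 (sub_ne_zero.2 hhp)]
end

theorem stmt4_general {n : ℕ} (C : Set (EuclideanSpace ℝ (Fin n)))
    (hCconv : Convex ℝ C) (h p : EuclideanSpace ℝ (Fin n)) (hh : h ∉ C)
    (hpC : p ∈ C) (hproj : ∀ s ∈ C, ‖h - p‖ ≤ ‖h - s‖) :
    HasDerivAt (fun t : ℝ => Metric.infDist ((1 + t) • h) C)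
      ((inner ℝ h (‖h - p‖⁻¹ • (h - p)) : ℝ)) 0 := by
  have hray : HasDerivAt (fun t : ℝ => (1 + t) • h) h 0 := by
    simpa using ((hasDerivAt_id (0 : ℝ)).const_add 1).smul_const h
  have hcomp := (hasFDerivAt_infDist_of_forall_norm_sub_le hCconv hh hpC hproj
    ).comp_hasDerivAt_of_eq 0 hray (by simp)
  rwa [innerSL_apply_apply, real_inner_comm] at hcomp

theorem stmt4 {n : ℕ} (C : Set (EuclideanSpace ℝ (Fin n))) (hCcl : IsClosed C)
    (hCconv : Convex ℝ C) (hCne : C.Nonempty) (h p : EuclideanSpace ℝ (Fin n)) (hh : h ∉ C)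
    (hpC : p ∈ C) (hproj : ∀ s ∈ C, ‖h - p‖ ≤ ‖h - s‖) :
    HasDerivAt (fun t : ℝ => Metric.infDist ((1 + t) • h) C)
      ((inner ℝ h (‖h - p‖⁻¹ • (h - p)) : ℝ)) 0 :=
  stmt4_general C hCconv h p hh hpC hproj
end

section
/- Let f : ℝⁿ → ℝ be convex and x₀ ∈ ℝⁿ not a minimizer of f. Let C = {w : f(x₀ + w) ≤ f(x₀)}. Then for any w* ∈ C: if f(x₀ + w*) < f(x₀), then the polar of the tangent cone of C at w* is {0}; if f(x₀ + w*) = f(x₀), then the polar of the tangent cone of C at w* equals cone(∂f(x₀ + w*)). -/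
noncomputable section

/-- The subdifferential of a convex function `f` at `x`. -/
def subdiff {n : ℕ} (f : EuclideanSpace ℝ (Fin n) → ℝ) (x : EuclideanSpace ℝ (Fin n)) :
    Set (EuclideanSpace ℝ (Fin n)) :=
  {s | ∀ y, f x + (inner ℝ s (y - x) : ℝ) ≤ f y}

/-- The polar cone of a set `K`. -/
def polarCone {n : ℕ} (K : Set (EuclideanSpace ℝ (Fin n))) : Set (EuclideanSpace ℝ (Fin n)) :=
  {u | ∀ v ∈ K, (inner ℝ u v : ℝ) ≤ 0}

/-- The conic hull of a set `S`. -/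
def coneHull {n : ℕ} (S : Set (EuclideanSpace ℝ (Fin n))) : Set (EuclideanSpace ℝ (Fin n)) :=
  {v | ∃ c : ℝ, 0 ≤ c ∧ ∃ s ∈ S, v = c • s}

/-- The tangent cone of a set `C` at `x`: closure of the cone of feasible directions. -/
def tangentConeOf {n : ℕ} (C : Set (EuclideanSpace ℝ (Fin n))) (x : EuclideanSpace ℝ (Fin n)) :
    Set (EuclideanSpace ℝ (Fin n)) :=
  closure {v | ∃ c : ℝ, 0 ≤ c ∧ ∃ u, x + u ∈ C ∧ v = c • u}

/-!
If `f (x₀ + w) < f x₀`, continuity of `f` makes `C` a neighbourhood of `w`, so the tangent cone is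
everything and its polar is `{0}`. On the level set, with `x = x₀ + w`, the polar of the tangent
cone consists of the `s` with `⟪s, z - x⟫ ≤ 0` whenever `f z ≤ f x`. Supporting the convex set
`{(p, q) | ∃ z, f z ≤ p ∧ q ≤ ⟪s, z⟫} ⊆ ℝ²` at its boundary point `(f x, ⟪s, x⟫)` gives a
Lagrange multiplier `c ≥ 0` with `⟪s, z - x⟫ ≤ c * (f z - f x)`; the supporting line cannot be
vertical because some point lies strictly below the level `f x` (Slater's condition). For `s ≠ 0`
this makes `c⁻¹ • s` a subgradient; for `s = 0` any subgradient will do, and one is obtained by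
supporting the epigraph of `f`.
-/

open Set Filter Topology
open scoped RealInnerProductSpace

variable {H : Type*} [NormedAddCommGroup H] [InnerProductSpace ℝ H]

theorem ConvexOn.exists_subgradient [CompleteSpace H] {f : H → ℝ} (hf : ConvexOn ℝ univ f)
    (hfc : Continuous f) (x : H) : ∃ g : H, ∀ y, f x + ⟪g, y - x⟫ ≤ f y := by
  have hS : Convex ℝ {p : H × ℝ | f p.1 < p.2} := by
    simpa using hf.convex_strict_epigraph
  obtain ⟨φ, hφ⟩ := geometric_hahn_banach_open_point hS
    (isOpen_lt (hfc.comp continuous_fst) continuous_snd) (x := (x, f x)) (lt_irrefl (f x))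
  set ℓ : H →L[ℝ] ℝ := φ.comp (ContinuousLinearMap.inl ℝ H ℝ)
  set β := φ (0, 1)
  have hφ_apply : ∀ z t, φ (z, t) = ℓ z + t * β := by
    intro z t
    rw [show (z, t) = (z, (0 : ℝ)) + t • ((0 : H), (1 : ℝ)) by simp, map_add, map_smul,
      smul_eq_mul]
    rfl
  have hβ : β < 0 := by
    have := hφ (x, f x + 1) (by simp)
    simp only [hφ_apply] at this; linarith
  have hsupp : ∀ y, ℓ y + f y * β ≤ ℓ x + f x * β := by
    intro y
    refine le_of_forall_pos_lt_add fun ε hε => ?_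
    have := hφ (y, f y + ε / -β) (by
      simp only [mem_ofPred_eq]; linarith [div_pos hε (neg_pos.2 hβ)])
    rw [hφ_apply, hφ_apply, add_mul, div_mul_eq_mul_div, div_neg,
      mul_div_cancel_right₀ _ hβ.ne] at this
    linarith
  refine ⟨(-β)⁻¹ • (InnerProductSpace.toDual ℝ H).symm ℓ, fun y => ?_⟩
  rw [real_inner_smul_left, InnerProductSpace.toDual_symm_apply, map_sub, inv_mul_eq_div,
    ← le_sub_iff_add_le', div_le_iff₀ (neg_pos.2 hβ)]
  linarith [hsupp y]

theorem ConvexOn.exists_lagrange_multiplier {E : Type*} [AddCommGroup E] [Module ℝ E]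
    {f g : E → ℝ} (hf : ConvexOn ℝ univ f) (hg : ConcaveOn ℝ univ g) {x : E}
    (hslater : ∃ y, f y < f x) (hmax : ∀ z, f z < f x → g z ≤ g x) :
    ∃ c : ℝ, 0 ≤ c ∧ ∀ z, g z - g x ≤ c * (f z - f x) := by
  set A : Set (ℝ × ℝ) := {p | ∃ z, f z ≤ p.1 ∧ p.2 ≤ g z}
  have hA : Convex ℝ A := by
    rintro p ⟨z₁, hf₁, hg₁⟩ q ⟨z₂, hf₂, hg₂⟩ a b ha hb hab
    refine ⟨a • z₁ + b • z₂, ?_, ?_⟩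
    · calc f (a • z₁ + b • z₂) ≤ a * f z₁ + b * f z₂ := hf.2 trivial trivial ha hb hab
        _ ≤ (a • p + b • q).1 := by simp only [Prod.fst_add, Prod.smul_fst, smul_eq_mul]; gcongr
    · calc (a • p + b • q).2 ≤ a * g z₁ + b * g z₂ := by
            simp only [Prod.snd_add, Prod.smul_snd, smul_eq_mul]; gcongr
        _ ≤ g (a • z₁ + b • z₂) := hg.2 trivial trivial ha hb hab
  have hint : (interior A).Nonempty := by
    refine ⟨(f x + 1, g x - 1), interior_maximal ?_ (isOpen_Ioi.prod isOpen_Iio)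
      (show (f x + 1, g x - 1) ∈ Ioi (f x) ×ˢ Iio (g x) by simp)⟩
    rintro p ⟨h₁, h₂⟩
    exact ⟨x, le_of_lt h₁, le_of_lt h₂⟩
  have hbdry : (f x, g x) ∉ interior A := by
    intro hx
    have hlim : Tendsto (fun δ : ℝ => (f x - δ, g x + δ)) (𝓝[>] 0) (𝓝 (f x, g x)) := by
      refine tendsto_nhdsWithin_of_tendsto_nhds ?_
      have hcont : Continuous fun δ : ℝ => (f x - δ, g x + δ) := by fun_prop
      simpa using hcont.tendsto 0
    obtain ⟨δ, ⟨z, hfz, hgz⟩, hδ⟩ :=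
      ((hlim.eventually (mem_interior_iff_mem_nhds.1 hx)).and self_mem_nhdsWithin).exists
    simp only at hδ hfz hgz
    linarith [hmax z (by linarith)]
  obtain ⟨φ, hφ0, hφ⟩ := geometric_hahn_banach_of_nonempty_interior_point hA hbdry hint
  set α := φ (1, 0)
  set β := φ (0, 1)
  have hφ_apply : ∀ p q, φ (p, q) = p * α + q * β := by
    intro p q
    rw [show (p, q) = p • ((1 : ℝ), (0 : ℝ)) + q • ((0 : ℝ), (1 : ℝ)) by simp, map_add,
      map_smul, map_smul, smul_eq_mul, smul_eq_mul]
  have hφz : ∀ z, f z * α + g z * β ≤ f x * α + g x * β := fun z => by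
    simpa only [hφ_apply] using hφ (f z, g z) ⟨z, le_rfl, le_rfl⟩
  have hα : α ≤ 0 := by
    have := hφ (f x + 1, g x) ⟨x, by simp, le_rfl⟩
    simp only [hφ_apply] at this; linarith
  have hβ : 0 < β := by
    refine lt_of_le_of_ne ?_ fun hβ0 => ?_
    · have := hφ (f x, g x - 1) ⟨x, le_rfl, by simp⟩
      simp only [hφ_apply] at this; linarith
    · have hα0 : α < 0 := lt_of_le_of_ne hα fun hα0 => hφ0 <| by
        refine ContinuousLinearMap.ext fun ⟨p, q⟩ => ?_
        simp [hφ_apply, hα0, ← hβ0]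
      obtain ⟨y, hy⟩ := hslater
      have := hφz y
      rw [← hβ0] at this
      nlinarith
  refine ⟨-α / β, div_nonneg (neg_nonneg.2 hα) hβ.le, fun z => ?_⟩
  rw [div_mul_eq_mul_div, le_div_iff₀ hβ]
  linarith [hφz z]

theorem ConvexOn.exists_eq_smul_subgradient [CompleteSpace H] {f : H → ℝ}
    (hf : ConvexOn ℝ univ f) (hfc : Continuous f) {x s : H} (hslater : ∃ y, f y < f x)
    (hs : ∀ z, f z < f x → ⟪s, z - x⟫ ≤ 0) :
    ∃ c : ℝ, 0 ≤ c ∧ ∃ g : H, (∀ y, f x + ⟪g, y - x⟫ ≤ f y) ∧ s = c • g := by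
  rcases eq_or_ne s 0 with rfl | hs0
  · obtain ⟨g, hg⟩ := hf.exists_subgradient hfc x
    exact ⟨0, le_rfl, g, hg, (zero_smul ℝ g).symm⟩
  obtain ⟨c, hc, hcs⟩ := hf.exists_lagrange_multiplier ((innerₛₗ ℝ s).concaveOn convex_univ)
    hslater fun z hz => by simpa [inner_sub_right] using hs z hz
  simp only [innerₛₗ_apply_apply] at hcs
  have hc0 : c ≠ 0 := by
    rintro rfl
    have := hcs (x + s)
    rw [inner_add_right, add_sub_cancel_left, zero_mul] at this
    exact hs0 (real_inner_self_nonpos.1 this)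
  refine ⟨c, hc, c⁻¹ • s, fun y => ?_, by rw [smul_smul, mul_inv_cancel₀ hc0, one_smul]⟩
  rw [real_inner_smul_left, inner_sub_right, inv_mul_eq_div, ← le_sub_iff_add_le',
    div_le_iff₀ (lt_of_le_of_ne hc (Ne.symm hc0))]
  linarith [hcs y]

theorem eq_zero_of_inner_nonpos_of_mem_nhds {s : H} {U : Set H} (hU : U ∈ 𝓝 0)
    (hs : ∀ u ∈ U, ⟪s, u⟫ ≤ 0) : s = 0 := by
  have hlim : Tendsto (fun t : ℝ => t • s) (𝓝[>] 0) (𝓝 0) := by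
    refine tendsto_nhdsWithin_of_tendsto_nhds ?_
    have hcont : Continuous fun t : ℝ => t • s := by fun_prop
    simpa using hcont.tendsto 0
  obtain ⟨t, htU, ht⟩ := ((hlim.eventually hU).and self_mem_nhdsWithin).exists
  have hst := hs _ htU
  rw [real_inner_smul_right] at hst
  exact real_inner_self_nonpos.1 (nonpos_of_mul_nonpos_right hst ht)

theorem polarCone_tangentConeOf {n : ℕ} (C : Set (EuclideanSpace ℝ (Fin n)))
    (x : EuclideanSpace ℝ (Fin n)) :
    polarCone (tangentConeOf C x) = {s | ∀ u, x + u ∈ C → ⟪s, u⟫ ≤ 0} := by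
  ext s
  refine ⟨fun hs u hu => hs u (subset_closure ⟨1, zero_le_one, u, hu, (one_smul ℝ u).symm⟩),
    fun hs v hv => ?_⟩
  have hclosed : IsClosed {v : EuclideanSpace ℝ (Fin n) | ⟪s, v⟫ ≤ 0} :=
    isClosed_le (by fun_prop) continuous_const
  refine closure_minimal ?_ hclosed hv
  rintro _ ⟨c, hc, u, hu, rfl⟩
  simpa [real_inner_smul_right] using mul_nonpos_of_nonneg_of_nonpos hc (hs u hu)

theorem stmt6_general {n : ℕ} (f : EuclideanSpace ℝ (Fin n) → ℝ) (hf : ConvexOn ℝ Set.univ f)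
    (x₀ : EuclideanSpace ℝ (Fin n)) (hmin : ∃ y, f y < f x₀)
    (w : EuclideanSpace ℝ (Fin n)) :
    (f (x₀ + w) < f x₀ →
      polarCone (tangentConeOf {u | f (x₀ + u) ≤ f x₀} w) = {0}) ∧
    (f (x₀ + w) = f x₀ →
      polarCone (tangentConeOf {u | f (x₀ + u) ≤ f x₀} w) = coneHull (subdiff f (x₀ + w))) := by
  have hfc : Continuous f := continuousOn_univ.1 (hf.continuousOn isOpen_univ)
  rw [polarCone_tangentConeOf]
  refine ⟨fun hlt => ?_, fun heq => ?_⟩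
  · have hU : {u | f (x₀ + (w + u)) < f x₀} ∈ 𝓝 0 :=
      (isOpen_lt (by fun_prop) continuous_const).mem_nhds (by simpa using hlt)
    refine subset_antisymm (fun s hs => eq_zero_of_inner_nonpos_of_mem_nhds hU
      fun u (hu : f (x₀ + (w + u)) < f x₀) => hs u hu.le) ?_
    rintro _ rfl u -
    simp
  · ext s
    constructor
    · intro hs
      rw [← heq] at hmin
      refine hf.exists_eq_smul_subgradient hfc hmin fun z hz => ?_
      simpa [add_assoc] using hs (z - (x₀ + w)) (by simpa [← add_assoc, heq] using hz.le)
    · rintro ⟨c, hc, g, hg, rfl⟩ u (hu : f (x₀ + (w + u)) ≤ f x₀)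
      have hgu := hg (x₀ + w + u)
      rw [add_sub_cancel_left, heq, add_assoc] at hgu
      rw [real_inner_smul_left]
      exact mul_nonpos_of_nonneg_of_nonpos hc (by linarith)

theorem stmt6 {n : ℕ} (f : EuclideanSpace ℝ (Fin n) → ℝ) (hf : ConvexOn ℝ Set.univ f)
    (x₀ : EuclideanSpace ℝ (Fin n)) (hmin : ∃ y, f y < f x₀)
    (w : EuclideanSpace ℝ (Fin n)) (hw : f (x₀ + w) ≤ f x₀) :
    (f (x₀ + w) < f x₀ →
      polarCone (tangentConeOf {u | f (x₀ + u) ≤ f x₀} w) = {0}) ∧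
    (f (x₀ + w) = f x₀ →
      polarCone (tangentConeOf {u | f (x₀ + u) ≤ f x₀} w) = coneHull (subdiff f (x₀ + w))) :=
  stmt6_general f hf x₀ hmin w
end
end

section
/- Let f : ℝⁿ → ℝ be convex and continuous and suppose x₀ ∈ ℝⁿ is not a minimizer of f. Then the polar cone of the tangent cone of the sublevel set {x : f(x) ≤ f(x₀)} at x₀ equals cone(∂f(x₀)), the conic hull of the subdifferential of f at x₀. -/
/-!
For convex `f` the one-sided directional derivative `f'(x₀; ·)` is sublinear, and Hahn–Banach
makes it the support function of `∂f(x₀)`: `f'(x₀; w) = max {⟪s, w⟫ | s ∈ ∂f(x₀)}`. So a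
direction `u` with `⟪s, u⟫ ≤ 0` on `∂f(x₀)` has `f'(x₀; u) ≤ 0`; tilting it slightly towards a
point `y` with `f y < f x₀` gives strict descent directions converging to `u`. Hence the tangent
cone of the sublevel set is exactly the polar of `∂f(x₀)`. As `∂f(x₀)` is convex, compact and
avoids `0`, its conic hull is a closed convex cone, which a separation argument identifies with
its bipolar.
-/

noncomputable section

open Set Filter Topology

section DirDeriv

variable {E : Type*} [AddCommGroup E] [Module ℝ E] {f : E → ℝ} {x w : E}

def dirQuot (f : E → ℝ) (x w : E) (t : ℝ) : ℝ := (f (x + t • w) - f x) / t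

-- For convex `f` the quotients increase with `t`, so this is the limit as `t → 0⁺`.
def dirDeriv (f : E → ℝ) (x w : E) : ℝ := ⨅ t : Ioi (0 : ℝ), dirQuot f x w t

lemma dirQuot_eq_slope (f : E → ℝ) (x w : E) :
    dirQuot f x w = slope (fun t : ℝ => f (x + t • w)) 0 := by
  ext t
  simp [dirQuot, slope_def_field]

lemma ConvexOn.comp_add_smul (hf : ConvexOn ℝ univ f) (x w : E) :
    ConvexOn ℝ univ (fun t : ℝ => f (x + t • w)) := by
  have hline : (fun t : ℝ => f (x + t • w)) = f ∘ AffineMap.lineMap x (x + w) := by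
    ext t
    simp [AffineMap.lineMap_apply, add_comm]
  rw [hline]
  exact hf.comp_affineMap _

lemma ConvexOn.dirQuot_mono (hf : ConvexOn ℝ univ f) (x w : E) :
    MonotoneOn (dirQuot f x w) {0}ᶜ := by
  rw [dirQuot_eq_slope, compl_eq_univ_sdiff]
  exact (hf.comp_add_smul x w).slope_mono (mem_univ 0)

lemma ConvexOn.bddBelow_dirQuot (hf : ConvexOn ℝ univ f) (x w : E) :
    BddBelow (range fun t : Ioi (0 : ℝ) => dirQuot f x w t) :=
  ⟨dirQuot f x w (-1), by
    rintro _ ⟨⟨t, ht⟩, rfl⟩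
    exact hf.dirQuot_mono x w (by norm_num) (ne_of_gt ht) (by linarith [mem_Ioi.1 ht])⟩

lemma ConvexOn.dirDeriv_le_dirQuot (hf : ConvexOn ℝ univ f) {t : ℝ} (ht : 0 < t) :
    dirDeriv f x w ≤ dirQuot f x w t :=
  ciInf_le (hf.bddBelow_dirQuot x w) ⟨t, ht⟩

lemma le_dirDeriv {a : ℝ} (h : ∀ t, 0 < t → a ≤ dirQuot f x w t) : a ≤ dirDeriv f x w :=
  le_ciInf fun t => h t t.2

lemma dirQuot_smul (c t : ℝ) : dirQuot f x (c • w) t = c * dirQuot f x w (c * t) := by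
  rcases eq_or_ne c 0 with rfl | hc
  · simp [dirQuot]
  · simp only [dirQuot, smul_smul, mul_comm t c]
    field_simp

lemma ConvexOn.dirDeriv_smul (hf : ConvexOn ℝ univ f) {c : ℝ} (hc : 0 < c) :
    dirDeriv f x (c • w) = c * dirDeriv f x w := by
  refine le_antisymm ?_ (le_dirDeriv fun t ht => ?_)
  · rw [← div_le_iff₀' hc]
    refine le_dirDeriv fun t ht => ?_
    rw [div_le_iff₀' hc]
    calc dirDeriv f x (c • w) ≤ dirQuot f x (c • w) (t / c) :=
          hf.dirDeriv_le_dirQuot (by positivity)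
      _ = c * dirQuot f x w t := by rw [dirQuot_smul, mul_div_cancel₀ t hc.ne']
  · rw [dirQuot_smul]
    exact mul_le_mul_of_nonneg_left (hf.dirDeriv_le_dirQuot (by positivity)) hc.le

lemma ConvexOn.dirQuot_add_le (hf : ConvexOn ℝ univ f) (w₁ w₂ : E) {t : ℝ} (ht : 0 < t) :
    dirQuot f x (w₁ + w₂) (t / 2) ≤ dirQuot f x w₁ t + dirQuot f x w₂ t := by
  have hmid := hf.2 (mem_univ (x + t • w₁)) (mem_univ (x + t • w₂))
    (by norm_num : (0 : ℝ) ≤ 1 / 2) (by norm_num : (0 : ℝ) ≤ 1 / 2) (by norm_num)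
  rw [show (1 / 2 : ℝ) • (x + t • w₁) + (1 / 2 : ℝ) • (x + t • w₂) = x + (t / 2) • (w₁ + w₂) by
    module, smul_eq_mul, smul_eq_mul] at hmid
  simp only [dirQuot, ← add_div, div_le_div_iff₀ (half_pos ht) ht]
  nlinarith

lemma ConvexOn.dirDeriv_add_le (hf : ConvexOn ℝ univ f) (w₁ w₂ : E) :
    dirDeriv f x (w₁ + w₂) ≤ dirDeriv f x w₁ + dirDeriv f x w₂ := by
  refine le_ciInf_add_ciInf fun ⟨t₁, (ht₁ : 0 < t₁)⟩ ⟨t₂, (ht₂ : 0 < t₂)⟩ => ?_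
  have ht : 0 < min t₁ t₂ := lt_min ht₁ ht₂
  calc dirDeriv f x (w₁ + w₂) ≤ dirQuot f x (w₁ + w₂) (min t₁ t₂ / 2) :=
        hf.dirDeriv_le_dirQuot (half_pos ht)
    _ ≤ dirQuot f x w₁ (min t₁ t₂) + dirQuot f x w₂ (min t₁ t₂) := hf.dirQuot_add_le w₁ w₂ ht
    _ ≤ dirQuot f x w₁ t₁ + dirQuot f x w₂ t₂ :=
        add_le_add (hf.dirQuot_mono x w₁ ht.ne' ht₁.ne' (min_le_left t₁ t₂))
          (hf.dirQuot_mono x w₂ ht.ne' ht₂.ne' (min_le_right t₁ t₂))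

lemma ConvexOn.dirDeriv_sub_le (hf : ConvexOn ℝ univ f) (x y : E) :
    dirDeriv f x (y - x) ≤ f y - f x := by
  simpa [dirQuot] using hf.dirDeriv_le_dirQuot (x := x) (w := y - x) one_pos

lemma exists_lt_of_dirDeriv_neg (h : dirDeriv f x w < 0) :
    ∃ t : ℝ, 0 < t ∧ f (x + t • w) < f x := by
  obtain ⟨⟨t, ht⟩, hq⟩ := exists_lt_of_ciInf_lt h
  exact ⟨t, ht, sub_neg.1 (neg_of_div_neg_left hq (le_of_lt ht))⟩

end DirDeriv

theorem exists_linearMap_le_eq_of_sublinear {E : Type*} [AddCommGroup E] [Module ℝ E]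
    (N : E → ℝ) (N_hom : ∀ c : ℝ, 0 < c → ∀ x, N (c • x) = c * N x)
    (N_add : ∀ x y, N (x + y) ≤ N x + N y) (w : E) :
    ∃ g : E →ₗ[ℝ] ℝ, (∀ x, g x ≤ N x) ∧ g w = N w := by
  have N_zero : N 0 = 0 := by
    have := N_hom 2 two_pos 0
    rw [smul_zero] at this
    linarith
  have smul_le : ∀ c : ℝ, c * N w ≤ N (c • w) := by
    intro c
    rcases lt_trichotomy c 0 with hc | rfl | hc
    · have := N_add w (-w)
      rw [add_neg_cancel, N_zero] at this
      rw [show c • w = (-c) • -w by module, N_hom _ (neg_pos.2 hc)]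
      nlinarith
    · simp [N_zero]
    · rw [N_hom c hc]
  let g₀ := LinearPMap.mkSpanSingleton' (σ := RingHom.id ℝ) w (N w) fun c hc => by
    rcases eq_or_ne c 0 with rfl | hc₀
    · simp
    · rw [(smul_eq_zero.1 hc).resolve_left hc₀, N_zero, smul_zero]
  obtain ⟨g, hg₀, hgN⟩ := exists_extension_of_le_sublinear g₀ N N_hom N_add <| by
    rintro ⟨_, hx⟩
    obtain ⟨c, rfl⟩ := Submodule.mem_span_singleton.1 hx
    rw [LinearPMap.mkSpanSingleton'_apply]
    exact smul_le c
  refine ⟨g, hgN, ?_⟩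
  exact (hg₀ ⟨w, Submodule.mem_span_singleton_self w⟩).trans
    (LinearPMap.mkSpanSingleton'_apply_self _ _ _ _)

section Subdiff

variable {n : ℕ} {f : EuclideanSpace ℝ (Fin n) → ℝ} {x : EuclideanSpace ℝ (Fin n)}

lemma ConvexOn.mem_subdiff_iff (hf : ConvexOn ℝ univ f) {s : EuclideanSpace ℝ (Fin n)} :
    s ∈ subdiff f x ↔ ∀ w, inner ℝ s w ≤ dirDeriv f x w := by
  refine ⟨fun hs w => le_dirDeriv fun t ht => ?_, fun hs y => ?_⟩
  · have := hs (x + t • w)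
    rw [add_sub_cancel_left, real_inner_smul_right] at this
    rw [dirQuot, le_div_iff₀ ht]
    linarith
  · linarith [(hs (y - x)).trans (hf.dirDeriv_sub_le x y)]

lemma ConvexOn.exists_mem_subdiff_inner_eq_dirDeriv (hf : ConvexOn ℝ univ f)
    (w : EuclideanSpace ℝ (Fin n)) : ∃ s ∈ subdiff f x, inner ℝ s w = dirDeriv f x w := by
  obtain ⟨g, hgN, hgw⟩ := exists_linearMap_le_eq_of_sublinear (dirDeriv f x)
    (fun _ hc _ => hf.dirDeriv_smul hc) hf.dirDeriv_add_le w
  let s := (InnerProductSpace.toDual ℝ _).symm (LinearMap.toContinuousLinearMap g)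
  have hs : ∀ v, inner ℝ s v = g v := fun v => InnerProductSpace.toDual_symm_apply
  exact ⟨s, hf.mem_subdiff_iff.2 fun v => (hs v).trans_le (hgN v), (hs w).trans hgw⟩

lemma ConvexOn.nonempty_subdiff (hf : ConvexOn ℝ univ f) (x : EuclideanSpace ℝ (Fin n)) :
    (subdiff f x).Nonempty :=
  let ⟨s, hs, _⟩ := hf.exists_mem_subdiff_inner_eq_dirDeriv (x := x) 0
  ⟨s, hs⟩

lemma isClosed_subdiff (f : EuclideanSpace ℝ (Fin n) → ℝ) (x : EuclideanSpace ℝ (Fin n)) :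
    IsClosed (subdiff f x) := by
  simp only [subdiff, ofPred_forall]
  exact isClosed_iInter fun y => isClosed_le (by fun_prop) continuous_const

lemma convex_subdiff (f : EuclideanSpace ℝ (Fin n) → ℝ) (x : EuclideanSpace ℝ (Fin n)) :
    Convex ℝ (subdiff f x) := by
  intro s₁ h₁ s₂ h₂ a b ha hb hab y
  rw [inner_add_left, real_inner_smul_left, real_inner_smul_left]
  linear_combination a * h₁ y + b * h₂ y + (f y - f x) * hab

lemma isBounded_subdiff (hcont : Continuous f) (x : EuclideanSpace ℝ (Fin n)) :
    Bornology.IsBounded (subdiff f x) := by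
  obtain ⟨M, hM⟩ := (isCompact_closedBall x 1).bddAbove_image hcont.continuousOn
  refine isBounded_iff_forall_norm_le.2 ⟨M - f x, fun s hs => ?_⟩
  rcases eq_or_ne s 0 with rfl | hs₀
  · simpa using hM (mem_image_of_mem f (Metric.mem_closedBall_self zero_le_one))
  · have hu : x + ‖s‖⁻¹ • s ∈ Metric.closedBall x 1 := by
      simp [norm_smul, hs₀]
    have := hs (x + ‖s‖⁻¹ • s)
    rw [add_sub_cancel_left, real_inner_smul_right, real_inner_self_eq_norm_sq,
      inv_mul_eq_div, sq, mul_self_div_self] at this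
    linarith [hM (mem_image_of_mem f hu)]

lemma isCompact_subdiff (hcont : Continuous f) (x : EuclideanSpace ℝ (Fin n)) :
    IsCompact (subdiff f x) :=
  Metric.isCompact_of_isClosed_isBounded (isClosed_subdiff f x) (isBounded_subdiff hcont x)

lemma zero_notMem_subdiff (hmin : ∃ y, f y < f x) : 0 ∉ subdiff f x := by
  obtain ⟨y, hy⟩ := hmin
  intro h
  simpa using (h y).trans_lt hy

end Subdiff

section Cone

variable {n : ℕ} {S : Set (EuclideanSpace ℝ (Fin n))}

lemma convex_coneHull (hS : Convex ℝ S) : Convex ℝ (coneHull S) := by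
  rintro _ ⟨c₁, hc₁, s₁, hs₁, rfl⟩ _ ⟨c₂, hc₂, s₂, hs₂, rfl⟩ a b ha hb hab
  rcases (by positivity : (0 : ℝ) ≤ a * c₁ + b * c₂).eq_or_lt with h | h
  · have h₁ : a * c₁ = 0 := by nlinarith [mul_nonneg ha hc₁, mul_nonneg hb hc₂]
    have h₂ : b * c₂ = 0 := by nlinarith [mul_nonneg ha hc₁, mul_nonneg hb hc₂]
    exact ⟨0, le_rfl, s₁, hs₁, by simp [smul_smul, h₁, h₂]⟩
  · refine ⟨a * c₁ + b * c₂, h.le, (a * c₁ / (a * c₁ + b * c₂)) • s₁ +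
      (b * c₂ / (a * c₁ + b * c₂)) • s₂, hS hs₁ hs₂ (by positivity) (by positivity)
      (by field_simp), ?_⟩
    simp only [smul_add, smul_smul, mul_div_cancel₀ _ h.ne']

lemma isClosed_coneHull (hS : IsCompact S) (h0 : 0 ∉ S) : IsClosed (coneHull S) := by
  obtain ⟨δ, hδ, hball⟩ := Metric.isOpen_iff.1 hS.isClosed.isOpen_compl 0 h0
  have hδS : ∀ s ∈ S, δ ≤ ‖s‖ := fun s hs =>
    not_lt.1 fun h => hball (mem_ball_zero_iff.2 h) hs
  refine isClosed_of_closure_subset fun v hv => ?_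
  let K := (fun p : ℝ × EuclideanSpace ℝ (Fin n) => p.1 • p.2) ''
    (Icc 0 ((‖v‖ + 1) / δ) ×ˢ S)
  have hK : IsCompact K := (isCompact_Icc.prod hS).image (by fun_prop)
  have hball_sub : Metric.ball v 1 ∩ coneHull S ⊆ K := by
    rintro _ ⟨hw, c, hc, s, hs, rfl⟩
    refine ⟨(c, s), ⟨⟨hc, ?_⟩, hs⟩, rfl⟩
    have hcs : c * ‖s‖ ≤ ‖v‖ + 1 := by
      rw [← abs_of_nonneg hc, ← Real.norm_eq_abs, ← norm_smul]
      linarith [norm_le_norm_add_norm_sub' (c • s) v, (mem_ball_iff_norm.1 hw).le]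
    rw [le_div_iff₀ hδ]
    nlinarith [hδS s hs]
  have hvK : v ∈ K := hK.isClosed.closure_subset_iff.2 hball_sub
    (Metric.isOpen_ball.inter_closure ⟨Metric.mem_ball_self one_pos, hv⟩)
  obtain ⟨⟨c, s⟩, ⟨⟨hc, -⟩, hs⟩, rfl⟩ := hvK
  exact ⟨c, hc, s, hs, rfl⟩

lemma polarCone_polarCone (hconv : Convex ℝ S) (hcomp : IsCompact S) (hne : S.Nonempty)
    (h0 : 0 ∉ S) : polarCone (polarCone S) = coneHull S := by
  refine subset_antisymm (fun v hv => ?_) ?_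
  · by_contra hvS
    obtain ⟨φ, α, hφ, hφv⟩ := geometric_hahn_banach_closed_point (convex_coneHull hconv)
      (isClosed_coneHull hcomp h0) hvS
    let u := (InnerProductSpace.toDual ℝ _).symm φ
    have hu : ∀ v, inner ℝ u v = φ v := fun v => InnerProductSpace.toDual_symm_apply
    obtain ⟨s₀, hs₀⟩ := hne
    have hα : 0 < α := by simpa using hφ 0 ⟨0, le_rfl, s₀, hs₀, (zero_smul ℝ s₀).symm⟩
    have hpolar : u ∈ polarCone S := fun s hs => by
      by_contra! hpos
      have := hφ _ ⟨α / inner ℝ u s, by positivity, s, hs, rfl⟩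
      rw [← hu, real_inner_smul_right, div_mul_cancel₀ _ hpos.ne'] at this
      exact lt_irrefl α this
    have := hv u hpolar
    rw [real_inner_comm, hu] at this
    linarith
  · rintro _ ⟨c, hc, s, hs, rfl⟩ u hu
    rw [real_inner_smul_left, real_inner_comm]
    exact mul_nonpos_of_nonneg_of_nonpos hc (hu s hs)

end Cone

section TangentCone

variable {n : ℕ} {f : EuclideanSpace ℝ (Fin n) → ℝ} {x₀ : EuclideanSpace ℝ (Fin n)}

lemma mem_tangentConeOf_of_add_smul_mem {C : Set (EuclideanSpace ℝ (Fin n))}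
    {v : EuclideanSpace ℝ (Fin n)} {t : ℝ} (ht : 0 < t) (h : x₀ + t • v ∈ C) :
    v ∈ tangentConeOf C x₀ :=
  subset_closure ⟨t⁻¹, by positivity, t • v, h, by rw [smul_smul, inv_mul_cancel₀ ht.ne', one_smul]⟩

lemma tangentConeOf_sublevel_subset_polarCone_subdiff :
    tangentConeOf {x | f x ≤ f x₀} x₀ ⊆ polarCone (subdiff f x₀) := by
  refine closure_minimal ?_ ?_
  · rintro _ ⟨c, hc, u, hu, rfl⟩ s hs
    have := hs (x₀ + u)
    rw [add_sub_cancel_left] at this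
    rw [real_inner_smul_left, real_inner_comm]
    exact mul_nonpos_of_nonneg_of_nonpos hc (by linarith [show f (x₀ + u) ≤ f x₀ from hu])
  · simp only [polarCone, ofPred_forall]
    exact isClosed_biInter fun s _ => isClosed_le (by fun_prop) continuous_const

lemma ConvexOn.polarCone_subdiff_subset_tangentConeOf_sublevel (hf : ConvexOn ℝ univ f)
    (hmin : ∃ y, f y < f x₀) :
    polarCone (subdiff f x₀) ⊆ tangentConeOf {x | f x ≤ f x₀} x₀ := by
  intro u hu
  obtain ⟨y, hy⟩ := hmin
  have hu' : dirDeriv f x₀ u ≤ 0 := by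
    obtain ⟨s, hs, hsu⟩ := hf.exists_mem_subdiff_inner_eq_dirDeriv (x := x₀) u
    rw [← hsu, real_inner_comm]
    exact hu s hs
  have hd : dirDeriv f x₀ (y - x₀) < 0 := (hf.dirDeriv_sub_le x₀ y).trans_lt (sub_neg.2 hy)
  have hdescent : ∀ ε : ℝ, 0 < ε → u + ε • (y - x₀) ∈ tangentConeOf {x | f x ≤ f x₀} x₀ := by
    intro ε hε
    have hneg : dirDeriv f x₀ (u + ε • (y - x₀)) < 0 := by
      have := hf.dirDeriv_add_le (x := x₀) u (ε • (y - x₀))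
      rw [hf.dirDeriv_smul hε] at this
      nlinarith
    obtain ⟨t, ht, hlt⟩ := exists_lt_of_dirDeriv_neg hneg
    exact mem_tangentConeOf_of_add_smul_mem ht hlt.le
  have hlim : Tendsto (fun ε : ℝ => u + ε • (y - x₀)) (𝓝[>] 0) (𝓝 u) := by
    have : Continuous fun ε : ℝ => u + ε • (y - x₀) := by fun_prop
    simpa using (this.tendsto 0).mono_left nhdsWithin_le_nhds
  exact isClosed_closure.mem_of_tendsto hlim (eventually_nhdsWithin_of_forall hdescent)

end TangentCone

theorem stmt7 {n : ℕ} (f : EuclideanSpace ℝ (Fin n) → ℝ) (hf : ConvexOn ℝ Set.univ f)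
    (hcont : Continuous f) (x₀ : EuclideanSpace ℝ (Fin n)) (hmin : ∃ y, f y < f x₀) :
    polarCone (tangentConeOf {x | f x ≤ f x₀} x₀) = coneHull (subdiff f x₀) := by
  rw [subset_antisymm tangentConeOf_sublevel_subset_polarCone_subdiff
      (hf.polarCone_subdiff_subset_tangentConeOf_sublevel hmin)]
  exact polarCone_polarCone (convex_subdiff f x₀) (isCompact_subdiff hcont x₀)
    (hf.nonempty_subdiff x₀) (zero_notMem_subdiff hmin)
end
end

section
/- Let x be a nonnegative random variable such that for some c > 0 and all t > 0, P(x ≥ c + t) ≤ exp(−t²/2). Then for any a ≥ 0, E[shrink_{a+c}(x)²] ≤ (2/(a²+1))·exp(−a²/2), where shrink_λ(x) = max(x − λ, 0) for x ≥ 0. -/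
/-!
By the layer-cake formula, `E[Y²] = ∫₀^∞ 2t P(Y ≥ t) dt` for `Y = shrink_{a+c}(X)`, and
`P(Y ≥ t) ≤ P(X ≥ c + (a + t)) ≤ exp(-(a+t)²/2)`. The remaining Gaussian-type integral is bounded by
comparison: `2t e^{-(a+t)²/2}` is dominated by `(2t + 4a/((a+t)²+1)²) e^{-(a+t)²/2}`, which has the
explicit antiderivative `-(2 - 2a(a+t)/((a+t)²+1)) e^{-(a+t)²/2}`, whose value at `0` is the bound.
-/

open MeasureTheory Set Filter Real Topology

section TailIntegral

noncomputable def tailAntideriv (a t : ℝ) : ℝ :=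
  (2 - 2 * a * (a + t) / ((a + t) ^ 2 + 1)) * exp (-(a + t) ^ 2 / 2)

noncomputable def tailMajorant (a t : ℝ) : ℝ :=
  (2 * t + 4 * a / ((a + t) ^ 2 + 1) ^ 2) * exp (-(a + t) ^ 2 / 2)

theorem hasDerivAt_tailAntideriv (a t : ℝ) :
    HasDerivAt (tailAntideriv a) (-tailMajorant a t) t := by
  have hden : (a + t) ^ 2 + 1 ≠ 0 := by positivity
  have hshift : HasDerivAt (fun t : ℝ => a + t) 1 t := (hasDerivAt_id t).const_add a
  have hsq : HasDerivAt (fun t : ℝ => (a + t) ^ 2) (2 * (a + t)) t := by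
    simpa using hshift.fun_pow 2
  have hexp : HasDerivAt (fun t : ℝ => exp (-(a + t) ^ 2 / 2))
      (exp (-(a + t) ^ 2 / 2) * (-(2 * (a + t)) / 2)) t := (hsq.neg.div_const 2).exp
  have hfactor : HasDerivAt (fun t : ℝ => 2 - 2 * a * (a + t) / ((a + t) ^ 2 + 1))
      (-((2 * a * 1 * ((a + t) ^ 2 + 1) - 2 * a * (a + t) * (2 * (a + t))) /
        ((a + t) ^ 2 + 1) ^ 2)) t :=
    ((hshift.const_mul (2 * a)).fun_div (hsq.add_const 1) hden).const_sub 2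
  refine (hfactor.mul hexp).congr_deriv ?_
  rw [tailMajorant]
  field_simp
  ring

theorem tailMajorant_nonneg {a t : ℝ} (ha : 0 ≤ a) (ht : 0 ≤ t) : 0 ≤ tailMajorant a t := by
  unfold tailMajorant
  positivity

theorem exp_mul_two_mul_le_tailMajorant {a t : ℝ} (ha : 0 ≤ a) :
    exp (-(a + t) ^ 2 / 2) * (2 * t) ≤ tailMajorant a t := by
  have : 0 ≤ 4 * a / ((a + t) ^ 2 + 1) ^ 2 := by positivity
  unfold tailMajorant
  nlinarith [exp_nonneg (-(a + t) ^ 2 / 2)]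

theorem tendsto_exp_neg_sq_add_div_two (a : ℝ) :
    Tendsto (fun t : ℝ => exp (-(a + t) ^ 2 / 2)) atTop (𝓝 0) := by
  have hsq : Tendsto (fun t : ℝ => (a + t) ^ 2) atTop atTop :=
    (tendsto_pow_atTop two_ne_zero).comp (tendsto_atTop_add_const_left _ a tendsto_id)
  exact tendsto_exp_atBot.comp ((tendsto_neg_atBot_iff.mpr hsq).atBot_div_const two_pos)

theorem tendsto_tailAntideriv_atTop {a : ℝ} (ha : 0 ≤ a) :
    Tendsto (tailAntideriv a) atTop (𝓝 0) := by
  have hupper : Tendsto (fun t : ℝ => 2 * exp (-(a + t) ^ 2 / 2)) atTop (𝓝 0) := by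
    simpa using (tendsto_exp_neg_sq_add_div_two a).const_mul 2
  refine tendsto_of_tendsto_of_tendsto_of_le_of_le' tendsto_const_nhds hupper ?_ ?_ <;>
    filter_upwards [eventually_ge_atTop (0 : ℝ)] with t ht <;>
    have hden : 0 < (a + t) ^ 2 + 1 := by positivity
  · refine mul_nonneg ?_ (exp_nonneg _)
    rw [sub_nonneg, div_le_iff₀ hden]
    nlinarith
  · refine mul_le_mul_of_nonneg_right ?_ (exp_nonneg _)
    have : 0 ≤ 2 * a * (a + t) / ((a + t) ^ 2 + 1) := by positivity
    linarith

theorem integrableOn_tailMajorant {a : ℝ} (ha : 0 ≤ a) :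
    IntegrableOn (tailMajorant a) (Ioi 0) := by
  simpa using (integrableOn_Ioi_deriv_of_nonpos' (fun t _ => hasDerivAt_tailAntideriv a t)
    (fun t ht => neg_nonpos.2 (tailMajorant_nonneg ha (le_of_lt ht)))
    (tendsto_tailAntideriv_atTop ha)).neg

theorem integral_tailMajorant {a : ℝ} (ha : 0 ≤ a) :
    ∫ t in Ioi 0, tailMajorant a t = 2 / (a ^ 2 + 1) * exp (-a ^ 2 / 2) := by
  have hftc := integral_Ioi_of_hasDerivAt_of_nonpos' (fun t _ => hasDerivAt_tailAntideriv a t)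
    (fun t ht => neg_nonpos.2 (tailMajorant_nonneg ha (le_of_lt ht)))
    (tendsto_tailAntideriv_atTop ha)
  rw [integral_neg, zero_sub, neg_inj] at hftc
  rw [hftc, tailAntideriv, add_zero]
  have : a ^ 2 + 1 ≠ 0 := by positivity
  field_simp
  ring

theorem integrableOn_exp_neg_sq_add_mul {a : ℝ} (ha : 0 ≤ a) :
    IntegrableOn (fun t => exp (-(a + t) ^ 2 / 2) * (2 * t)) (Ioi 0) := by
  refine (integrableOn_tailMajorant ha).mono' (by fun_prop) ?_
  filter_upwards [ae_restrict_mem measurableSet_Ioi] with t (ht : 0 < t)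
  rw [norm_of_nonneg (by positivity)]
  exact exp_mul_two_mul_le_tailMajorant ha

theorem integral_exp_neg_sq_add_mul_le {a : ℝ} (ha : 0 ≤ a) :
    ∫ t in Ioi 0, exp (-(a + t) ^ 2 / 2) * (2 * t) ≤ 2 / (a ^ 2 + 1) * exp (-a ^ 2 / 2) := by
  rw [← integral_tailMajorant ha]
  exact setIntegral_mono_on (integrableOn_exp_neg_sq_add_mul ha) (integrableOn_tailMajorant ha)
    measurableSet_Ioi fun t _ => exp_mul_two_mul_le_tailMajorant ha

end TailIntegral

section LayerCake

variable {Ω : Type*} [MeasurableSpace Ω] {μ : Measure Ω} {Y : Ω → ℝ}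

theorem lintegral_sq_eq_lintegral_meas_le_mul (hY : 0 ≤ᵐ[μ] Y) (hYm : AEMeasurable Y μ) :
    ∫⁻ ω, ENNReal.ofReal (Y ω ^ 2) ∂μ
      = ∫⁻ t in Ioi 0, μ {ω | t ≤ Y ω} * ENNReal.ofReal (2 * t) := by
  rw [← lintegral_comp_eq_lintegral_meas_le_mul (g := fun t => 2 * t) μ hY hYm
    (fun t _ => (continuous_const.mul continuous_id).intervalIntegrable 0 t)
    ((ae_restrict_iff' measurableSet_Ioi).2 (Eventually.of_forall fun t (ht : 0 < t) => by
      positivity))]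
  congr 1 with ω
  rw [intervalIntegral.integral_const_mul, integral_id]
  ring_nf

theorem integral_sq_le_of_meas_le {g : ℝ → ℝ} (hY : ∀ ω, 0 ≤ Y ω) (hg : ∀ t, 0 ≤ g t)
    (hgi : IntegrableOn (fun t => g t * (2 * t)) (Ioi 0))
    (htail : ∀ t > 0, μ {ω | t ≤ Y ω} ≤ ENNReal.ofReal (g t)) :
    ∫ ω, Y ω ^ 2 ∂μ ≤ ∫ t in Ioi 0, g t * (2 * t) := by
  have hRHS : 0 ≤ ∫ t in Ioi 0, g t * (2 * t) :=
    setIntegral_nonneg measurableSet_Ioi fun t (ht : 0 < t) => by have := hg t; positivity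
  by_cases hsm : AEStronglyMeasurable (fun ω => Y ω ^ 2) μ
  swap
  · rwa [integral_non_aestronglyMeasurable hsm]
  have hYm : AEMeasurable Y μ :=
    (continuous_sqrt.measurable.comp_aemeasurable hsm.aemeasurable).congr
      (Eventually.of_forall fun ω => sqrt_sq (hY ω))
  rw [integral_eq_lintegral_of_nonneg_ae (Eventually.of_forall fun ω => sq_nonneg _) hsm,
    lintegral_sq_eq_lintegral_meas_le_mul (Eventually.of_forall hY) hYm]
  refine ENNReal.toReal_le_of_le_ofReal hRHS ?_
  rw [ofReal_integral_eq_lintegral_ofReal hgi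
    ((ae_restrict_iff' measurableSet_Ioi).2 (Eventually.of_forall fun t (ht : 0 < t) => by
      have := hg t; positivity))]
  refine setLIntegral_mono' measurableSet_Ioi fun t (ht : 0 < t) => ?_
  rw [ENNReal.ofReal_mul' (show 0 ≤ 2 * t by positivity)]
  exact mul_le_mul_left (htail t ht) _

end LayerCake

theorem meas_le_max_sub_le {Ω : Type*} [MeasurableSpace Ω] (μ : Measure Ω) (X : Ω → ℝ)
    {s t : ℝ} (ht : 0 < t) : μ {ω | t ≤ max (X ω - s) 0} ≤ μ {ω | s + t ≤ X ω} := by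
  refine measure_mono fun ω (hω : t ≤ max (X ω - s) 0) => ?_
  rcases le_max_iff.1 hω with h | h
  · show s + t ≤ X ω
    linarith
  · linarith

theorem stmt12_general {Ω : Type*} [MeasurableSpace Ω] (μ : Measure Ω)
    (X : Ω → ℝ) (c : ℝ)
    (htail : ∀ t > (0 : ℝ), μ {ω | c + t ≤ X ω} ≤ ENNReal.ofReal (Real.exp (-t ^ 2 / 2)))
    (a : ℝ) (ha : 0 ≤ a) :
    ∫ ω, max (X ω - (a + c)) 0 ^ 2 ∂μ ≤ 2 / (a ^ 2 + 1) * Real.exp (-a ^ 2 / 2) := by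
  refine (integral_sq_le_of_meas_le (fun ω => le_max_right _ _) (fun t => exp_nonneg _)
    (integrableOn_exp_neg_sq_add_mul ha) fun t ht => ?_).trans (integral_exp_neg_sq_add_mul_le ha)
  calc μ {ω | t ≤ max (X ω - (a + c)) 0}
      ≤ μ {ω | a + c + t ≤ X ω} := meas_le_max_sub_le μ X ht
    _ = μ {ω | c + (a + t) ≤ X ω} := by simp only [add_comm a c, add_assoc]
    _ ≤ _ := htail (a + t) (by positivity)

theorem stmt12 {Ω : Type*} [MeasurableSpace Ω] (μ : Measure Ω) [IsProbabilityMeasure μ]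
    (X : Ω → ℝ) (hX : ∀ ω, 0 ≤ X ω) (c : ℝ) (hc : 0 < c)
    (htail : ∀ t > (0 : ℝ), μ {ω | c + t ≤ X ω} ≤ ENNReal.ofReal (Real.exp (-t ^ 2 / 2)))
    (a : ℝ) (ha : 0 ≤ a) :
    ∫ ω, max (X ω - (a + c)) 0 ^ 2 ∂μ ≤ 2 / (a ^ 2 + 1) * Real.exp (-a ^ 2 / 2) :=
  stmt12_general μ X c htail a ha
end

section
/- Let f : ℝⁿ → ℝ be convex and L-Lipschitz, and let A ∈ ℝ^{m×n} with m < n. Suppose the minimum singular value of Aᵀ satisfies σ_min(Aᵀ) > 0. If λ·L < σ_min(Aᵀ), then any minimizer x* of x ↦ ‖y − Ax‖ + λ f(x) satisfies y = Ax*. -/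
/-!
Let `r = y - A x`. The bound `σ ‖v‖ ≤ ‖Aᵀ v‖` makes `Aᵀ` injective, hence `A Aᵀ` invertible, so
`r = A w` with `w = Aᵀ u`; moreover `‖w‖² = ⟪u, r⟫ ≤ ‖u‖ ‖r‖ ≤ ‖w‖ ‖r‖ / σ`, i.e. `σ ‖w‖ ≤ ‖r‖`.
At `x + w` the residual vanishes, so optimality of `x` and the Lipschitz bound give
`‖r‖ ≤ λ (f (x + w) - f x) ≤ λ L ‖w‖`. Together with `σ ‖w‖ ≤ ‖r‖` and `λ L < σ` this forces
`w = 0`, hence `r = 0`.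
-/

open Matrix

theorem LinearMap.exists_preimage_mul_norm_le_of_mul_norm_le_adjoint {𝕜 E F : Type*} [RCLike 𝕜]
    [NormedAddCommGroup E] [InnerProductSpace 𝕜 E] [FiniteDimensional 𝕜 E]
    [NormedAddCommGroup F] [InnerProductSpace 𝕜 F] [FiniteDimensional 𝕜 F]
    (S : E →ₗ[𝕜] F) {c : ℝ} (hc : 0 < c) (h : ∀ v, c * ‖v‖ ≤ ‖S.adjoint v‖) (r : F) :
    ∃ w, S w = r ∧ c * ‖w‖ ≤ ‖r‖ := by
  have hadj_inj : Function.Injective S.adjoint :=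
    (injective_iff_map_eq_zero _).2 fun v hv ↦
      norm_le_zero_iff.1 <| nonpos_of_mul_nonpos_right (by simpa [hv] using h v) hc
  have hsurj : Function.Surjective (S ∘ₗ S.adjoint) :=
    LinearMap.surjective_of_injective <| by
      rwa [coe_comp, self_comp_adjoint_injective_iff]
  obtain ⟨u, rfl⟩ := hsurj r
  refine ⟨S.adjoint u, rfl, ?_⟩
  set w := S.adjoint u
  show c * ‖w‖ ≤ ‖S w‖
  have hw_sq : ‖w‖ ^ 2 ≤ ‖u‖ * ‖S w‖ :=
    calc ‖w‖ ^ 2 = RCLike.re (inner 𝕜 w w) := (inner_self_eq_norm_sq w).symm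
      _ = RCLike.re (inner 𝕜 u (S w)) := by rw [adjoint_inner_left]
      _ ≤ ‖u‖ * ‖S w‖ := re_inner_le_norm u (S w)
  rcases (norm_nonneg w).eq_or_lt with hw0 | hwpos
  · rw [← hw0, mul_zero]
    exact norm_nonneg _
  · refine le_of_mul_le_mul_right ?_ hwpos
    nlinarith [h u, norm_nonneg (S w)]

theorem eq_apply_of_forall_norm_sub_apply_add_mul_le {E F G : Type*} [SeminormedAddCommGroup E]
    [NormedAddCommGroup F] [FunLike G E F] [AddHomClass G E F] (S : G) (f : E → ℝ)
    {L lam c : ℝ} (hf : ∀ x x', |f x - f x'| ≤ L * ‖x - x'‖) (hlam : 0 ≤ lam)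
    (hlt : lam * L < c) (hS : ∀ r, ∃ w, S w = r ∧ c * ‖w‖ ≤ ‖r‖) (y : F) (x : E)
    (hopt : ∀ x', ‖y - S x‖ + lam * f x ≤ ‖y - S x'‖ + lam * f x') :
    y = S x := by
  obtain ⟨w, hw, hcw⟩ := hS (y - S x)
  have hstep : ‖y - S x‖ + lam * f x ≤ lam * f (x + w) := by
    simpa [map_add, hw] using hopt (x + w)
  have hf_step : f (x + w) - f x ≤ L * ‖w‖ := by
    simpa using (abs_le.1 (hf (x + w) x)).2
  have hres : ‖y - S x‖ ≤ lam * L * ‖w‖ := by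
    nlinarith [mul_le_mul_of_nonneg_left hf_step hlam]
  have hw0 : ‖w‖ = 0 := le_antisymm (by nlinarith) (norm_nonneg w)
  rw [hw0, mul_zero] at hres
  exact sub_eq_zero.1 (norm_le_zero_iff.1 hres)

theorem stmt15_general {m n : ℕ} (A : Matrix (Fin m) (Fin n) ℝ)
    (f : EuclideanSpace ℝ (Fin n) → ℝ)
    (L : ℝ) (hfLip : ∀ x x', |f x - f x'| ≤ L * ‖x - x'‖)
    (y : EuclideanSpace ℝ (Fin m)) (lam : ℝ) (hlam : 0 ≤ lam)
    (smin : ℝ) (hsmin : 0 < smin)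
    (hs : ∀ v : EuclideanSpace ℝ (Fin m), smin * ‖v‖ ≤ ‖Matrix.toEuclideanLin Aᵀ v‖)
    (hlt : lam * L < smin)
    (x : EuclideanSpace ℝ (Fin n))
    (hopt : ∀ x', ‖y - Matrix.toEuclideanLin A x‖ + lam * f x
      ≤ ‖y - Matrix.toEuclideanLin A x'‖ + lam * f x') :
    y = Matrix.toEuclideanLin A x := by
  have hadj : (Matrix.toEuclideanLin A).adjoint = Matrix.toEuclideanLin Aᵀ := by
    rw [← Matrix.toEuclideanLin_conjTranspose_eq_adjoint, conjTranspose_eq_transpose_of_trivial]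
  have hsolve := (Matrix.toEuclideanLin A).exists_preimage_mul_norm_le_of_mul_norm_le_adjoint
    hsmin (hadj ▸ hs)
  exact eq_apply_of_forall_norm_sub_apply_add_mul_le _ f hfLip hlam hlt hsolve y x hopt

theorem stmt15 {m n : ℕ} (hmn : m < n) (A : Matrix (Fin m) (Fin n) ℝ)
    (f : EuclideanSpace ℝ (Fin n) → ℝ) (hfconv : ConvexOn ℝ Set.univ f)
    (L : ℝ) (hL : 0 < L) (hfLip : ∀ x x', |f x - f x'| ≤ L * ‖x - x'‖)
    (y : EuclideanSpace ℝ (Fin m)) (lam : ℝ) (hlam : 0 ≤ lam)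
    (smin : ℝ) (hsmin : 0 < smin)
    (hs : ∀ v : EuclideanSpace ℝ (Fin m), smin * ‖v‖ ≤ ‖Matrix.toEuclideanLin Aᵀ v‖)
    (hlt : lam * L < smin)
    (x : EuclideanSpace ℝ (Fin n))
    (hopt : ∀ x', ‖y - Matrix.toEuclideanLin A x‖ + lam * f x
      ≤ ‖y - Matrix.toEuclideanLin A x'‖ + lam * f x') :
    y = Matrix.toEuclideanLin A x :=
  stmt15_general A f L hfLip y lam hlam smin hsmin hs hlt x hopt
end

section
/- Let f : ℝⁿ → ℝ be convex, x₀ ∈ ℝⁿ, λ > 0, and suppose x* minimizes x ↦ ‖y − Ax‖ + λ f(x) with y − Ax* ≠ 0. Then x* also minimizes x ↦ ½‖y − Ax‖² + τ' f(x) for τ' = λ·‖Ax* − y‖. -/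
/-!
Multiply the optimality inequality `r + λ f(x) ≤ r' + λ f(x')`, where `r = ‖y - A x‖` and
`r' = ‖y - A x'‖`, by `r ≥ 0`, and bound `r r' ≤ (r² + r'²) / 2`.
-/

theorem half_sq_add_mul_le_of_add_mul_le {a b c u v : ℝ} (ha : 0 ≤ a)
    (h : a + c * u ≤ b + c * v) :
    1 / 2 * a ^ 2 + (c * a) * u ≤ 1 / 2 * b ^ 2 + (c * a) * v := by
  have hscaled : a * (a + c * u) ≤ a * (b + c * v) := mul_le_mul_of_nonneg_left h ha
  nlinarith [sq_nonneg (a - b)]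

theorem stmt16_general {m n : ℕ} (A : Matrix (Fin m) (Fin n) ℝ)
    (f : EuclideanSpace ℝ (Fin n) → ℝ)
    (y : EuclideanSpace ℝ (Fin m)) (lam : ℝ)
    (x : EuclideanSpace ℝ (Fin n))
    (hopt : ∀ x', ‖y - Matrix.toEuclideanLin A x‖ + lam * f x
      ≤ ‖y - Matrix.toEuclideanLin A x'‖ + lam * f x') :
    ∀ x', (1 / 2) * ‖y - Matrix.toEuclideanLin A x‖ ^ 2
        + (lam * ‖Matrix.toEuclideanLin A x - y‖) * f x
      ≤ (1 / 2) * ‖y - Matrix.toEuclideanLin A x'‖ ^ 2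
        + (lam * ‖Matrix.toEuclideanLin A x - y‖) * f x' := by
  intro x'
  rw [norm_sub_rev (Matrix.toEuclideanLin A x) y]
  exact half_sq_add_mul_le_of_add_mul_le (norm_nonneg _) (hopt x')

theorem stmt16 {m n : ℕ} (A : Matrix (Fin m) (Fin n) ℝ)
    (f : EuclideanSpace ℝ (Fin n) → ℝ) (hfconv : ConvexOn ℝ Set.univ f)
    (y : EuclideanSpace ℝ (Fin m)) (lam : ℝ) (hlam : 0 < lam)
    (x : EuclideanSpace ℝ (Fin n))
    (hopt : ∀ x', ‖y - Matrix.toEuclideanLin A x‖ + lam * f x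
      ≤ ‖y - Matrix.toEuclideanLin A x'‖ + lam * f x')
    (hne : y - Matrix.toEuclideanLin A x ≠ 0) :
    ∀ x', (1 / 2) * ‖y - Matrix.toEuclideanLin A x‖ ^ 2
        + (lam * ‖Matrix.toEuclideanLin A x - y‖) * f x
      ≤ (1 / 2) * ‖y - Matrix.toEuclideanLin A x'‖ ^ 2
        + (lam * ‖Matrix.toEuclideanLin A x - y‖) * f x' :=
  stmt16_general A f y lam x hopt
end

section
/- Let D : [0,∞) → ℝ be strictly convex, continuous, differentiable on (0,∞), with unique minimizer λ_best, D(0) = n, lim_{λ→∞} D(λ) = ∞, and suppose D(λ_best) < m < n for some real m. Then the equation m − D(λ) = C(λ), where C(λ) := −(λ/2)·D'(λ), has a unique solution on [0, λ_best]; and the equation D(λ) = m has a unique solution on [λ_best, ∞). -/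
/-!
Put `G λ = D λ - λ D'(λ)/2 = D λ + C λ`. For `0 ≤ a < b ≤ λ_best`, strict convexity gives
`D b - D a < (b - a) D'(b)`, and together with `a D'(a) ≤ a D'(b)` and `D'(b) ≤ 0` this yields
`G b < G a`. The derivative of a differentiable convex function is continuous (a monotone
function with the Darboux property), and `λ D'(λ) → 0` as `λ → 0⁺`, so `G` is continuous on
`[0, λ_best]` and runs from `G 0 = n` down to `G λ_best = D λ_best`; the intermediate value theorem
gives the first root. Past `λ_best` the derivative is positive, so `D` increases strictly to `∞`.
-/

open Set Filter Topology

section IntermediateValue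

variable {α δ : Type*} [ConditionallyCompleteLinearOrder α] [TopologicalSpace α] [OrderTopology α]
  [DenselyOrdered α] [LinearOrder δ] [TopologicalSpace δ] [OrderClosedTopology δ] {f : α → δ}

theorem StrictAntiOn.existsUnique_eq_of_mem_Icc {a b : α} {y : δ} (hab : a ≤ b)
    (hf : StrictAntiOn f (Icc a b)) (hc : ContinuousOn f (Icc a b)) (hy : y ∈ Icc (f b) (f a)) :
    ∃! x, x ∈ Icc a b ∧ f x = y := by
  obtain ⟨x, hx, rfl⟩ := intermediate_value_Icc' hab hc hy
  exact ⟨x, ⟨hx, rfl⟩, fun z hz => hf.injOn hz.1 hx hz.2⟩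

theorem StrictMonoOn.existsUnique_eq_of_tendsto_atTop {a : α} {y : δ}
    (hf : StrictMonoOn f (Ici a)) (hc : ContinuousOn f (Ici a)) (htop : Tendsto f atTop atTop)
    (hy : f a ≤ y) : ∃! x, x ∈ Ici a ∧ f x = y := by
  obtain ⟨M, hMy, haM⟩ := ((htop.eventually_ge_atTop y).and (eventually_ge_atTop a)).exists
  obtain ⟨x, hx, rfl⟩ := intermediate_value_Icc haM (hc.mono Icc_subset_Ici_self) ⟨hy, hMy⟩
  exact ⟨x, ⟨hx.1, rfl⟩, fun z hz => hf.injOn hz.1 hx.1 hz.2⟩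

end IntermediateValue

section Derivative

variable {f f' : ℝ → ℝ} {s : Set ℝ}

theorem ConvexOn.monotoneOn_of_hasDerivAt (hf : ConvexOn ℝ s f)
    (hf' : ∀ x ∈ s, HasDerivAt f (f' x) x) : MonotoneOn f' s := by
  intro a ha b hb hab
  rcases hab.eq_or_lt with rfl | hab
  · exact le_rfl
  exact (hf.le_slope_of_hasDerivAt ha hb hab (hf' a ha)).trans
    (hf.slope_le_of_hasDerivAt ha hb hab (hf' b hb))

theorem StrictConvexOn.strictMonoOn_of_hasDerivAt (hf : StrictConvexOn ℝ s f)
    (hf' : ∀ x ∈ s, HasDerivAt f (f' x) x) : StrictMonoOn f' s := fun a ha b hb hab =>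
  (hf.lt_slope_of_hasDerivAt ha hb hab (hf' a ha)).trans
    (hf.slope_lt_of_hasDerivAt ha hb hab (hf' b hb))

-- By Darboux's theorem `f' '' s` is order-connected, so it contains `[f' x, f' y]` for `x < a < y`.
theorem continuousOn_of_hasDerivAt_of_strictMonoOn (hs : IsOpen s) (hs' : s.OrdConnected)
    (hf : ∀ x ∈ s, HasDerivAt f (f' x) x) (hf' : StrictMonoOn f' s) : ContinuousOn f' s := by
  intro a ha
  obtain ⟨l, u, ⟨hla, hau⟩, hlu⟩ := mem_nhds_iff_exists_Ioo_subset.1 (hs.mem_nhds ha)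
  obtain ⟨x, hlx, hxa⟩ := exists_between hla
  obtain ⟨y, hay, hyu⟩ := exists_between hau
  have hx : x ∈ s := hlu ⟨hlx, hxa.trans hau⟩
  have hy : y ∈ s := hlu ⟨hla.trans hay, hyu⟩
  have himage : Icc (f' x) (f' y) ⊆ f' '' s :=
    (hs'.image_hasDerivWithinAt fun z hz => (hf z hz).hasDerivWithinAt).out
      (mem_image_of_mem f' hx) (mem_image_of_mem f' hy)
  exact (hf'.continuousAt_of_image_mem_nhds (hs.mem_nhds ha)
    (mem_of_superset (Icc_mem_nhds (hf' hx ha hxa) (hf' ha hy hay)) himage)).continuousWithinAt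

end Derivative

section ConvexOnIci

variable {D D' : ℝ → ℝ}

-- Squeeze `D x - D 0 ≤ x D'(x) ≤ x D'(1)` for `0 ≤ x < 1`; at `x = 0` the junk value `D' 0` is
-- multiplied by `0`.
theorem ConvexOn.continuousWithinAt_mul_deriv_zero (hD : ConvexOn ℝ (Ici 0) D)
    (hcont : ContinuousWithinAt D (Ici 0) 0) (hderiv : ∀ x > (0 : ℝ), HasDerivAt D (D' x) x) :
    ContinuousWithinAt (fun x => x * D' x) (Ici 0) 0 := by
  have hmono : MonotoneOn D' (Ioi 0) :=
    (hD.subset Ioi_subset_Ici_self (convex_Ioi 0)).monotoneOn_of_hasDerivAt hderiv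
  have hbounds : ∀ x ∈ Ico (0 : ℝ) 1, D x - D 0 ≤ x * D' x ∧ x * D' x ≤ x * D' 1 := by
    rintro x ⟨hx0, hx1⟩
    rcases hx0.eq_or_lt with rfl | hx0
    · simp
    have hlow : slope D 0 x ≤ D' x :=
      hD.slope_le_of_hasDerivAt self_mem_Ici hx0.le hx0 (hderiv x hx0)
    rw [slope_def_field, sub_zero, div_le_iff₀ hx0] at hlow
    exact ⟨by linarith, mul_le_mul_of_nonneg_left (hmono hx0 (mem_Ioi.2 one_pos) hx1.le) hx0.le⟩
  have hlow : Tendsto (fun x => D x - D 0) (𝓝[Ici 0] 0) (𝓝 0) := by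
    simpa using hcont.tendsto.sub_const (D 0)
  have hup : Tendsto (fun x => x * D' 1) (𝓝[Ici 0] 0) (𝓝 0) := by
    simpa using ((continuous_id.mul_const (D' 1)).tendsto 0).mono_left nhdsWithin_le_nhds
  have hIco : Ico (0 : ℝ) 1 ∈ 𝓝[Ici 0] 0 := Ico_mem_nhdsGE one_pos
  rw [ContinuousWithinAt, zero_mul]
  exact tendsto_of_tendsto_of_tendsto_of_le_of_le' hlow hup
    (eventually_of_mem hIco fun x hx => (hbounds x hx).1)
    (eventually_of_mem hIco fun x hx => (hbounds x hx).2)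

theorem StrictConvexOn.continuousOn_mul_deriv (hD : StrictConvexOn ℝ (Ici 0) D)
    (hcont : ContinuousOn D (Ici 0)) (hderiv : ∀ x > (0 : ℝ), HasDerivAt D (D' x) x) :
    ContinuousOn (fun x => x * D' x) (Ici 0) := by
  intro x hx
  rcases (mem_Ici.1 hx).eq_or_lt with rfl | hx0
  · exact hD.convexOn.continuousWithinAt_mul_deriv_zero (hcont 0 self_mem_Ici) hderiv
  have hD' : ContinuousOn D' (Ioi 0) := continuousOn_of_hasDerivAt_of_strictMonoOn isOpen_Ioi
    ordConnected_Ioi hderiv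
    ((hD.subset Ioi_subset_Ici_self (convex_Ioi 0)).strictMonoOn_of_hasDerivAt hderiv)
  exact (continuousAt_id.mul (hD'.continuousAt (Ioi_mem_nhds hx0))).continuousWithinAt

theorem StrictConvexOn.strictAntiOn_sub_mul_deriv_half {b : ℝ} (hD : StrictConvexOn ℝ (Ici 0) D)
    (hderiv : ∀ x > (0 : ℝ), HasDerivAt D (D' x) x) (hD' : ∀ x ∈ Ioc 0 b, D' x ≤ 0) :
    StrictAntiOn (fun x => D x - x * D' x / 2) (Icc 0 b) := by
  have hmono : MonotoneOn D' (Ioi 0) :=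
    (hD.convexOn.subset Ioi_subset_Ici_self (convex_Ioi 0)).monotoneOn_of_hasDerivAt hderiv
  intro a ha c hc hac
  have hc0 : 0 < c := ha.1.trans_lt hac
  have hsecant : D c - D a < (c - a) * D' c := by
    have h := hD.slope_lt_of_hasDerivAt ha.1 hc0.le hac (hderiv c hc0)
    rwa [slope_def_field, div_lt_iff₀ (sub_pos.2 hac), mul_comm] at h
  have hDa : a * D' a ≤ a * D' c := by
    rcases ha.1.eq_or_lt with rfl | ha0
    · simp
    exact mul_le_mul_of_nonneg_left (hmono ha0 hc0 hac.le) ha0.le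
  have hDc : (c - a) * D' c ≤ 0 :=
    mul_nonpos_of_nonneg_of_nonpos (sub_nonneg.2 hac.le) (hD' c ⟨hc0, hc.2⟩)
  show D c - c * D' c / 2 < D a - a * D' a / 2
  linarith

end ConvexOnIci

theorem stmt17_general (D D' : ℝ → ℝ) (n m : ℝ) (lb : ℝ)
    (hconv : StrictConvexOn ℝ (Set.Ici 0) D)
    (hcont : ContinuousOn D (Set.Ici 0))
    (hderiv : ∀ x > (0 : ℝ), HasDerivAt D (D' x) x)
    (hlb : 0 ≤ lb)
    (hmin : ∀ x ∈ Set.Ici (0 : ℝ), D lb ≤ D x)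
    (hD0 : D 0 = n)
    (htop : Filter.Tendsto D Filter.atTop Filter.atTop)
    (hm1 : D lb < m) (hm2 : m < n) :
    (∃! l : ℝ, l ∈ Set.Icc 0 lb ∧ m - D l = -(l / 2) * D' l) ∧
    (∃! l : ℝ, l ∈ Set.Ici lb ∧ D l = m) := by
  have hlb0 : 0 < lb := hlb.lt_of_ne (by rintro rfl; linarith)
  have hD'mono : StrictMonoOn D' (Ioi 0) :=
    (hconv.subset Ioi_subset_Ici_self (convex_Ioi 0)).strictMonoOn_of_hasDerivAt hderiv
  have hD'lb : D' lb = 0 :=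
    IsLocalMin.hasDerivAt_eq_zero (mem_of_superset (Ici_mem_nhds hlb0) hmin) (hderiv lb hlb0)
  constructor
  · have hanti := hconv.strictAntiOn_sub_mul_deriv_half hderiv
      fun x hx => hD'lb ▸ hD'mono.monotoneOn hx.1 hlb0 hx.2
    have hcontG : ContinuousOn (fun x => D x - x * D' x / 2) (Icc 0 lb) :=
      (hcont.sub ((hconv.continuousOn_mul_deriv hcont hderiv).div_const 2)).mono
        Icc_subset_Ici_self
    obtain ⟨l, hl, hunique⟩ := hanti.existsUnique_eq_of_mem_Icc (y := m) hlb hcontG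
      ⟨by simp only [hD'lb]; linarith, by simp only [hD0]; linarith⟩
    exact ⟨l, ⟨hl.1, by linarith [hl.2]⟩, fun y hy => hunique y ⟨hy.1, by linarith [hy.2]⟩⟩
  · have hDmono : StrictMonoOn D (Ici lb) :=
      strictMonoOn_of_deriv_pos (convex_Ici lb) (hcont.mono (Ici_subset_Ici.2 hlb)) fun x hx => by
        rw [interior_Ici] at hx
        rw [(hderiv x (hlb0.trans hx)).deriv, ← hD'lb]
        exact hD'mono hlb0 (hlb0.trans hx) hx
    exact hDmono.existsUnique_eq_of_tendsto_atTop (hcont.mono (Ici_subset_Ici.2 hlb)) htop hm1.le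

theorem stmt17 (D D' : ℝ → ℝ) (n m : ℝ) (lb : ℝ)
    (hconv : StrictConvexOn ℝ (Set.Ici 0) D)
    (hcont : ContinuousOn D (Set.Ici 0))
    (hderiv : ∀ x > (0 : ℝ), HasDerivAt D (D' x) x)
    (hlb : 0 ≤ lb)
    (hmin : ∀ x ∈ Set.Ici (0 : ℝ), D lb ≤ D x)
    (huniq : ∀ x ∈ Set.Ici (0 : ℝ), D x = D lb → x = lb)
    (hD0 : D 0 = n)
    (htop : Filter.Tendsto D Filter.atTop Filter.atTop)
    (hm1 : D lb < m) (hm2 : m < n) :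
    (∃! l : ℝ, l ∈ Set.Icc 0 lb ∧ m - D l = -(l / 2) * D' l) ∧
    (∃! l : ℝ, l ∈ Set.Ici lb ∧ D l = m) :=
  stmt17_general D D' n m lb hconv hcont hderiv hlb hmin hD0 htop hm1 hm2
end

section
/- Let K ⊆ ℝⁿ be a closed convex cone, g ∈ ℝᵐ, h ∈ ℝⁿ, and σ > 0 with ‖g‖ > dist(h, K). Let T be the closed convex cone with polar K, and let w* be any minimizer of the function w ↦ √(‖w‖² + σ²)·‖g‖ − ⟨h, w⟩ subject to w ∈ T. Then ‖w*‖²/σ² ≤ dist(h, K)²/(‖g‖² − dist(h,K)²). -/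
open Metric

set_option maxHeartbeats 1000000 in
theorem stmt19 {m n : ℕ} (K T : Set (EuclideanSpace ℝ (Fin n)))
    (hKcl : IsClosed K) (hKconv : Convex ℝ K)
    (hKcone : ∀ c : ℝ, 0 ≤ c → ∀ x ∈ K, c • x ∈ K) (hKne : K.Nonempty)
    (hTcl : IsClosed T) (hTconv : Convex ℝ T)
    (hTcone : ∀ c : ℝ, 0 ≤ c → ∀ x ∈ T, c • x ∈ T) (hTne : T.Nonempty)
    (hpolar : {u : EuclideanSpace ℝ (Fin n) | ∀ v ∈ T, (inner ℝ u v : ℝ) ≤ 0} = K)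
    (g : EuclideanSpace ℝ (Fin m)) (h : EuclideanSpace ℝ (Fin n)) (σ : ℝ) (hσ : 0 < σ)
    (hgd : infDist h K < ‖g‖)
    (w : EuclideanSpace ℝ (Fin n)) (hwT : w ∈ T)
    (hopt : ∀ w' ∈ T, Real.sqrt (‖w‖ ^ 2 + σ ^ 2) * ‖g‖ - (inner ℝ h w : ℝ)
        ≤ Real.sqrt (‖w'‖ ^ 2 + σ ^ 2) * ‖g‖ - (inner ℝ h w' : ℝ)) :
    ‖w‖ ^ 2 / σ ^ 2 ≤ infDist h K ^ 2 / (‖g‖ ^ 2 - infDist h K ^ 2) := by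
  set d : ℝ := infDist h K with hd_def
  have hd0 : 0 ≤ d := infDist_nonneg
  have hg0 : 0 < ‖g‖ := lt_of_le_of_lt hd0 hgd
  have hden : 0 < ‖g‖ ^ 2 - d ^ 2 := by nlinarith
  set r : ℝ := ‖w‖ with hr_def
  have hr0 : 0 ≤ r := norm_nonneg w
  rcases eq_or_lt_of_le hr0 with hr | hr
  · rw [← hr]
    have h0 : (0 : ℝ) ^ 2 / σ ^ 2 = 0 := by norm_num
    rw [h0]
    positivity
  -- Moreau step: ⟨h, w⟩ ≤ d * r
  obtain ⟨p, hpK, hpd⟩ := hKcl.exists_infDist_eq_dist hKne h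
  have hinner : (inner ℝ h w : ℝ) ≤ d * r := by
    have hp0 : (inner ℝ p w : ℝ) ≤ 0 := by
      have hpmem : p ∈ {u : EuclideanSpace ℝ (Fin n) | ∀ v ∈ T, (inner ℝ u v : ℝ) ≤ 0} := by
        rw [hpolar]; exact hpK
      exact hpmem w hwT
    have hcs : (inner ℝ (h - p) w : ℝ) ≤ ‖h - p‖ * ‖w‖ := real_inner_le_norm _ _
    have hnorm : ‖h - p‖ = d := by
      rw [hd_def, hpd, dist_eq_norm]
    have hsplit : (inner ℝ h w : ℝ) = inner ℝ p w + inner ℝ (h - p) w := by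
      rw [inner_sub_left]; ring
    rw [hnorm] at hcs
    rw [hsplit]
    have : ‖w‖ = r := rfl
    rw [this] at hcs
    linarith
  set a : ℝ := (inner ℝ h w : ℝ) with ha_def
  set s : ℝ := Real.sqrt (r ^ 2 + σ ^ 2) with hs_def
  have hs_pos : 0 < s := Real.sqrt_pos.mpr (by positivity)
  have hs_sq : s ^ 2 = r ^ 2 + σ ^ 2 := Real.sq_sqrt (by positivity)
  -- Ray optimality: for c ∈ [0,1), ‖g‖*(1+c)*r^2 ≤ 2*a*s
  have hray : ∀ c : ℝ, 0 ≤ c → c < 1 → ‖g‖ * ((1 + c) * r ^ 2) ≤ 2 * a * s := by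
    intro c hc0 hc1
    have hmem : c • w ∈ T := hTcone c hc0 w hwT
    have hopt' := hopt (c • w) hmem
    have hnsm : ‖c • w‖ = c * r := by
      rw [norm_smul, Real.norm_eq_abs, abs_of_nonneg hc0]
    have hism : (inner ℝ h (c • w) : ℝ) = c * a := real_inner_smul_right h w c
    rw [hnsm, hism] at hopt'
    set sc : ℝ := Real.sqrt ((c * r) ^ 2 + σ ^ 2) with hsc_def
    have hsc_pos : 0 < sc := Real.sqrt_pos.mpr (by positivity)
    have hsc_sq : sc ^ 2 = (c * r) ^ 2 + σ ^ 2 := Real.sq_sqrt (by positivity)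
    have hc2 : (0:ℝ) ≤ 1 - c ^ 2 := by nlinarith
    have hsc_le : sc ≤ s := by
      apply Real.sqrt_le_sqrt
      nlinarith [mul_nonneg hc2 (sq_nonneg r)]
    have hc1' : 0 < 1 - c := by linarith
    -- from hopt': ‖g‖ * (s - sc) ≤ a * (1 - c)
    have h1 : ‖g‖ * (s - sc) ≤ a * (1 - c) := by nlinarith [hopt']
    have ha0 : 0 ≤ a := by
      nlinarith [h1, mul_nonneg hg0.le (sub_nonneg.mpr hsc_le)]
    have h2 : (s - sc) * (s + sc) = (1 - c ^ 2) * r ^ 2 := by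
      linear_combination hs_sq - hsc_sq
    have h3 : ‖g‖ * ((1 - c ^ 2) * r ^ 2) ≤ a * (1 - c) * (s + sc) := by
      calc ‖g‖ * ((1 - c ^ 2) * r ^ 2) = (‖g‖ * (s - sc)) * (s + sc) := by
            linear_combination (-‖g‖) * h2
        _ ≤ a * (1 - c) * (s + sc) :=
            mul_le_mul_of_nonneg_right h1 (by positivity)
    have h4 : a * (1 - c) * (s + sc) ≤ a * (1 - c) * (2 * s) :=
      mul_le_mul_of_nonneg_left (by linarith) (mul_nonneg ha0 hc1'.le)
    have h5 : ‖g‖ * ((1 - c ^ 2) * r ^ 2) ≤ a * (1 - c) * (2 * s) := h3.trans h4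
    have h6 : (1 - c) * (‖g‖ * ((1 + c) * r ^ 2)) ≤ (1 - c) * (2 * a * s) := by
      calc (1 - c) * (‖g‖ * ((1 + c) * r ^ 2)) = ‖g‖ * ((1 - c ^ 2) * r ^ 2) := by ring
        _ ≤ a * (1 - c) * (2 * s) := h5
        _ = (1 - c) * (2 * a * s) := by ring
    exact le_of_mul_le_mul_left h6 hc1'
  -- limit c → 1⁻ : 2‖g‖r² ≤ 2as
  have hlim : ‖g‖ * (2 * r ^ 2) ≤ 2 * a * s := by
    by_contra hcon
    push_neg at hcon
    set X : ℝ := ‖g‖ * r ^ 2 with hX_def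
    have hX0 : 0 < X := by positivity
    set δ : ℝ := 2 * X - 2 * a * s with hδ_def
    have hδ0 : 0 < δ := by
      have hXe : ‖g‖ * (2 * r ^ 2) = 2 * X := by rw [hX_def]; ring
      rw [hXe] at hcon
      linarith
    set t : ℝ := min 1 (δ / X) with ht_def
    have ht0 : 0 < t := lt_min one_pos (by positivity)
    have ht1 : t ≤ 1 := min_le_left _ _
    have htX : t * X ≤ δ := by
      have hle : t ≤ δ / X := min_le_right _ _
      calc t * X ≤ (δ / X) * X := mul_le_mul_of_nonneg_right hle hX0.le
        _ = δ := by field_simp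
    have hc := hray (1 - t / 2) (by linarith) (by linarith)
    have heq : ‖g‖ * ((1 + (1 - t / 2)) * r ^ 2) = 2 * X - (t * X) / 2 := by
      rw [hX_def]; ring
    rw [heq] at hc
    linarith
  -- combine with hinner : a ≤ d r
  have hfin : ‖g‖ * r ≤ d * s := by
    have h6 : ‖g‖ * (2 * r ^ 2) ≤ 2 * (d * r) * s := by
      calc ‖g‖ * (2 * r ^ 2) ≤ 2 * a * s := hlim
        _ ≤ 2 * (d * r) * s := by nlinarith [hinner, hs_pos]
    nlinarith [h6, hr]
  have hsq : ‖g‖ ^ 2 * r ^ 2 ≤ d ^ 2 * (r ^ 2 + σ ^ 2) := by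
    have := mul_self_le_mul_self (mul_nonneg hg0.le hr0) hfin
    nlinarith [this, hs_sq]
  rw [div_le_div_iff₀ (by positivity) hden]
  nlinarith [hsq]
end
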